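/- Dilated-cube weak-limit vanishing: let φ ∈ L^2(R^d) and let g_n be unitary operators on L^2(R^d) of the form g_n f(ξ) = (h_n^1/h_n^2)^{d/2} f((h_n^1/h_n^2)ξ + c_n) with h_n^1, h_n^2 > 0 and c_n ∈ R^d. If h_n^1/h_n^2 + h_n^2/h_n^1 + |c_n| → ∞, then g_n φ ⇀ 0 weakly in L^2(R^d). -/

import Mathlib

/-!
Approximating `φ` and `ψ` in `L²` by continuous compactly supported functions costs an error that
is uniform in `n`, because each `g_n` is an isometry of `L²`. So let `φ`, `ψ` be bounded and
supported in balls of radii `a`, `b` around `0`. Pairing `g_n φ` in `L^∞` against `ψ` in `L¹`,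
or `g_n φ` in `L¹` against `ψ` in `L^∞`, bounds `⟨g_n φ, ψ⟩` by `C · min(λ, λ⁻¹)^{d/2}`. When
`|c| > a + λ b` the supports of `g_n φ` and `ψ` are disjoint. Otherwise `|c|` is controlled by
`λ + λ⁻¹`, so `λ + λ⁻¹ + |c| → ∞` forces `min(λ, λ⁻¹) → 0`.
-/

open MeasureTheory Filter Topology Module Metric
open scoped ENNReal ComplexConjugate InnerProductSpace

theorem tendsto_of_forall_dist_le {ι X : Type*} [PseudoMetricSpace X] {L : Filter ι}
    {u : ι → X} {y : X} (h : ∀ ε > 0, ∃ v : ι → X, Tendsto v L (𝓝 y) ∧ ∀ i, dist (u i) (v i) ≤ ε) :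
    Tendsto u L (𝓝 y) := by
  refine Metric.tendsto_nhds.2 fun ε hε => ?_
  obtain ⟨v, hv, huv⟩ := h (ε / 2) (half_pos hε)
  filter_upwards [Metric.tendsto_nhds.1 hv (ε / 2) (half_pos hε)] with i hi
  linarith [dist_triangle (u i) (v i) y, huv i]

theorem norm_inner_sub_inner_le {𝕜 H : Type*} [RCLike 𝕜] [NormedAddCommGroup H]
    [InnerProductSpace 𝕜 H] (x x' y y' : H) :
    ‖⟪x, y⟫_𝕜 - ⟪x', y'⟫_𝕜‖ ≤ ‖x‖ * ‖y - y'‖ + ‖x - x'‖ * (‖y‖ + ‖y - y'‖) := by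
  have hy' : ‖y'‖ ≤ ‖y‖ + ‖y - y'‖ := by simpa using norm_sub_le y (y - y')
  calc ‖⟪x, y⟫_𝕜 - ⟪x', y'⟫_𝕜‖ = ‖⟪x, y - y'⟫_𝕜 + ⟪x - x', y'⟫_𝕜‖ := by
        rw [inner_sub_left, inner_sub_right]; ring_nf
    _ ≤ ‖x‖ * ‖y - y'‖ + ‖x - x'‖ * ‖y'‖ :=
        (norm_add_le _ _).trans (add_le_add (norm_inner_le_norm _ _) (norm_inner_le_norm _ _))
    _ ≤ ‖x‖ * ‖y - y'‖ + ‖x - x'‖ * (‖y‖ + ‖y - y'‖) := by gcongr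

section L2

variable {α 𝕜 : Type*} [MeasurableSpace α] {μ : Measure α} [RCLike 𝕜] {f f' g g' : α → 𝕜}

theorem MeasureTheory.MemLp.integral_mul_conj_eq_inner (hf : MemLp f 2 μ) (hg : MemLp g 2 μ) :
    ∫ x, f x * conj (g x) ∂μ = ⟪hg.toLp g, hf.toLp f⟫_𝕜 := by
  rw [L2.inner_def]
  refine integral_congr_ae ?_
  filter_upwards [hf.coeFn_toLp, hg.coeFn_toLp] with x hfx hgx
  simp only [hfx, hgx, RCLike.inner_apply]

theorem MeasureTheory.MemLp.norm_integral_mul_conj_sub_le (hf : MemLp f 2 μ) (hf' : MemLp f' 2 μ)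
    (hg : MemLp g 2 μ) (hg' : MemLp g' 2 μ) :
    ‖∫ x, f x * conj (g x) ∂μ - ∫ x, f' x * conj (g' x) ∂μ‖ ≤
      (eLpNorm g 2 μ).toReal * (eLpNorm (f - f') 2 μ).toReal +
        (eLpNorm (g - g') 2 μ).toReal *
          ((eLpNorm f 2 μ).toReal + (eLpNorm (f - f') 2 μ).toReal) := by
  rw [hf.integral_mul_conj_eq_inner hg, hf'.integral_mul_conj_eq_inner hg',
    ← Lp.norm_toLp g hg, ← Lp.norm_toLp f hf, ← Lp.norm_toLp _ (hf.sub hf'),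
    ← Lp.norm_toLp _ (hg.sub hg'), MemLp.toLp_sub, MemLp.toLp_sub]
  exact norm_inner_sub_inner_le _ _ _ _

end L2

theorem min_inv_le_div_of_le_add_mul {l x a b : ℝ} (hl : 0 < l) (hb : 0 ≤ b)
    (hx : x ≤ a + l * b) (ha : a < l + l⁻¹ + x) :
    min l l⁻¹ ≤ 2 * (1 + b) / (l + l⁻¹ + x - a) := by
  rw [le_div_iff₀ (by linarith)]
  have hm : 0 < min l l⁻¹ := lt_min hl (inv_pos.2 hl)
  have hml : min l l⁻¹ * l ≤ 1 := (mul_le_mul_of_nonneg_right (min_le_right _ _) hl.le).trans_eq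
    (inv_mul_cancel₀ hl.ne')
  have hml' : min l l⁻¹ * l⁻¹ ≤ 1 := (mul_le_mul_of_nonneg_right (min_le_left _ _)
    (inv_pos.2 hl).le).trans_eq (mul_inv_cancel₀ hl.ne')
  -- `min l l⁻¹ * (l + l⁻¹) ≤ 2` and `l + l⁻¹ + x - a ≤ (1 + b) * (l + l⁻¹)`
  nlinarith [mul_nonneg hm.le hb, mul_nonneg (mul_nonneg hm.le hb) (inv_pos.2 hl).le]

section DilateTranslate

variable {E 𝕜 : Type*} [NormedAddCommGroup E] [NormedSpace ℝ E] [RCLike 𝕜]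

variable (l : ℝ) (c : E) in
noncomputable def dilateTranslate (f : E → 𝕜) (ξ : E) : 𝕜 :=
  ((l ^ ((finrank ℝ E : ℝ) / 2) : ℝ) : 𝕜) * f (l • ξ + c)

theorem dilateTranslate_sub (l : ℝ) (c : E) (f g : E → 𝕜) :
    dilateTranslate l c (f - g) = dilateTranslate l c f - dilateTranslate l c g := by
  ext ξ
  simp only [dilateTranslate, Pi.sub_apply, mul_sub]

variable [MeasurableSpace E] {μ : Measure E}

theorem norm_integral_dilateTranslate_mul_conj_le_of_bound_left {l : ℝ} (hl : 0 ≤ l) (c : E)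
    {φ ψ : E → 𝕜} {M : ℝ} (hφ : ∀ x, ‖φ x‖ ≤ M) (hψ : Integrable ψ μ) :
    ‖∫ ξ, dilateTranslate l c φ ξ * conj (ψ ξ) ∂μ‖ ≤
      l ^ ((finrank ℝ E : ℝ) / 2) * (M * ∫ ξ, ‖ψ ξ‖ ∂μ) := by
  rw [← integral_const_mul, ← integral_const_mul]
  refine norm_integral_le_of_norm_le ((hψ.norm.const_mul M).const_mul _) (.of_forall fun ξ => ?_)
  rw [dilateTranslate, norm_mul, norm_mul, RCLike.norm_conj, RCLike.norm_ofReal,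
    abs_of_nonneg (by positivity), mul_assoc]
  gcongr
  exact hφ _

theorem integral_dilateTranslate_mul_conj_eq_zero {l : ℝ} (hl : 0 ≤ l) {c : E} {φ ψ : E → 𝕜}
    {a b : ℝ} (hφ : Function.support φ ⊆ closedBall 0 a)
    (hψ : Function.support ψ ⊆ closedBall 0 b) (hc : a + l * b < ‖c‖) :
    ∫ ξ, dilateTranslate l c φ ξ * conj (ψ ξ) ∂μ = 0 := by
  refine integral_eq_zero_of_ae (.of_forall fun ξ => ?_)
  by_contra h
  obtain ⟨hT, hψξ⟩ := mul_ne_zero_iff.1 h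
  have hξ : ‖ξ‖ ≤ b := mem_closedBall_zero_iff.1 (hψ (by simpa using hψξ))
  have hφξ : ‖l • ξ + c‖ ≤ a := mem_closedBall_zero_iff.1 (hφ (right_ne_zero_of_mul hT))
  have hcξ : ‖c‖ ≤ ‖l • ξ + c‖ + l * ‖ξ‖ := by
    simpa [norm_smul, abs_of_nonneg hl] using norm_sub_le (l • ξ + c) (l • ξ)
  nlinarith

variable [FiniteDimensional ℝ E] [BorelSpace E] [μ.IsAddHaarMeasure]

theorem MeasureTheory.Measure.map_smul_add_const {l : ℝ} (hl : l ≠ 0) (c : E) :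
    μ.map (fun x => l • x + c) = ENNReal.ofReal |(l ^ finrank ℝ E)⁻¹| • μ := by
  change μ.map ((· + c) ∘ (l • ·)) = _
  rw [← Measure.map_map (measurable_add_const c) (measurable_const_smul l),
    Measure.map_addHaar_smul μ hl, Measure.map_smul, (measurePreserving_add_right μ c).map_eq]

theorem eLpNorm_dilateTranslate {l : ℝ} (hl : 0 < l) (c : E) {f : E → 𝕜}
    (hf : AEStronglyMeasurable f μ) :
    eLpNorm (dilateTranslate l c f) 2 μ = eLpNorm f 2 μ := by
  set n : ℝ := (finrank ℝ E : ℝ)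
  have hmeas : Measurable fun x : E => l • x + c := by fun_prop
  have hmap := Measure.map_smul_add_const (μ := μ) hl.ne' c
  have hf' : AEStronglyMeasurable f (μ.map fun x => l • x + c) := by
    rw [hmap]; exact hf.mono_ac Measure.smul_absolutelyContinuous
  have hscale :
      ‖((l ^ (n / 2) : ℝ) : 𝕜)‖ₑ * ENNReal.ofReal |(l ^ finrank ℝ E)⁻¹| ^ (2 : ℝ)⁻¹ = 1 := by
    rw [← ofReal_norm, RCLike.norm_ofReal, abs_of_pos (by positivity),
      abs_of_pos (by positivity), ← Real.rpow_natCast, ← Real.rpow_neg hl.le,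
      ENNReal.ofReal_rpow_of_nonneg (by positivity) (by norm_num), ← Real.rpow_mul hl.le,
      ← ENNReal.ofReal_mul (by positivity), ← Real.rpow_add hl]
    simp [n, div_eq_mul_inv]
  change eLpNorm (((l ^ (n / 2) : ℝ) : 𝕜) • (f ∘ fun x => l • x + c)) 2 μ = _
  rw [eLpNorm_const_smul, ← eLpNorm_map_measure hf' hmeas.aemeasurable, hmap,
    eLpNorm_smul_measure_of_ne_top ENNReal.ofNat_ne_top, smul_eq_mul, ← mul_assoc,
    show (1 / 2 : ℝ≥0∞).toReal = 2⁻¹ by norm_num, hscale, one_mul]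

theorem MeasureTheory.MemLp.dilateTranslate {l : ℝ} (hl : 0 < l) (c : E) {f : E → 𝕜}
    (hf : MemLp f 2 μ) : MemLp (dilateTranslate l c f) 2 μ := by
  have hqmp : Measure.QuasiMeasurePreserving (fun x : E => l • x + c) μ μ :=
    ⟨by fun_prop, by
      rw [Measure.map_smul_add_const hl.ne' c]; exact Measure.smul_absolutelyContinuous⟩
  refine ⟨(hf.1.comp_quasiMeasurePreserving hqmp).const_mul _, ?_⟩
  rw [eLpNorm_dilateTranslate hl c hf.1]
  exact hf.2

theorem norm_integral_dilateTranslate_mul_conj_le_of_bound_right {l : ℝ} (hl : 0 < l) (c : E)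
    {φ ψ : E → 𝕜} {M : ℝ} (hφ : Integrable φ μ) (hψ : ∀ x, ‖ψ x‖ ≤ M) :
    ‖∫ ξ, dilateTranslate l c φ ξ * conj (ψ ξ) ∂μ‖ ≤
      l⁻¹ ^ ((finrank ℝ E : ℝ) / 2) * (M * ∫ ξ, ‖φ ξ‖ ∂μ) := by
  set n : ℝ := (finrank ℝ E : ℝ)
  have hint : Integrable (fun ξ => ‖φ (l • ξ + c)‖) μ :=
    ((hφ.comp_add_right c).comp_smul hl.ne').norm
  have hchange : ∫ ξ, ‖φ (l • ξ + c)‖ ∂μ = (l ^ finrank ℝ E)⁻¹ * ∫ ξ, ‖φ ξ‖ ∂μ := by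
    rw [Measure.integral_comp_smul μ (fun x => ‖φ (x + c)‖) l,
      integral_add_right_eq_self (fun x => ‖φ x‖) c, smul_eq_mul, abs_of_pos (by positivity)]
  have hscale : l ^ (n / 2) * (l ^ finrank ℝ E)⁻¹ = l⁻¹ ^ (n / 2) := by
    rw [← Real.rpow_natCast, ← Real.rpow_neg hl.le, ← Real.rpow_add hl, Real.inv_rpow hl.le,
      ← Real.rpow_neg hl.le]
    congr 1
    simp only [n]
    ring
  calc ‖∫ ξ, dilateTranslate l c φ ξ * conj (ψ ξ) ∂μ‖
      ≤ ∫ ξ, l ^ (n / 2) * (‖φ (l • ξ + c)‖ * M) ∂μ := by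
        refine norm_integral_le_of_norm_le ((hint.mul_const M).const_mul _)
          (.of_forall fun ξ => ?_)
        rw [dilateTranslate, norm_mul, norm_mul, RCLike.norm_conj, RCLike.norm_ofReal,
          abs_of_nonneg (by positivity), mul_assoc]
        gcongr
        exact hψ _
    _ = l ^ (n / 2) * (l ^ finrank ℝ E)⁻¹ * (M * ∫ ξ, ‖φ ξ‖ ∂μ) := by
        rw [integral_const_mul, integral_mul_const, hchange]
        ring
    _ = l⁻¹ ^ (n / 2) * (M * ∫ ξ, ‖φ ξ‖ ∂μ) := by rw [hscale]

theorem norm_integral_dilateTranslate_mul_conj_le_min {l : ℝ} (hl : 0 < l) (c : E)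
    {φ ψ : E → 𝕜} {Mφ Mψ : ℝ} (hφ : Integrable φ μ) (hφM : ∀ x, ‖φ x‖ ≤ Mφ)
    (hψ : Integrable ψ μ) (hψM : ∀ x, ‖ψ x‖ ≤ Mψ) :
    ‖∫ ξ, dilateTranslate l c φ ξ * conj (ψ ξ) ∂μ‖ ≤
      max (Mφ * ∫ ξ, ‖ψ ξ‖ ∂μ) (Mψ * ∫ ξ, ‖φ ξ‖ ∂μ) * min l l⁻¹ ^ ((finrank ℝ E : ℝ) / 2) := by
  rcases le_total l 1 with hl1 | hl1
  · rw [min_eq_left (hl1.trans ((one_le_inv₀ hl).2 hl1)), mul_comm]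
    refine (norm_integral_dilateTranslate_mul_conj_le_of_bound_left hl.le c hφM hψ).trans ?_
    gcongr
    exact le_max_left _ _
  · rw [min_eq_right (((inv_le_one₀ hl).2 hl1).trans hl1), mul_comm]
    refine (norm_integral_dilateTranslate_mul_conj_le_of_bound_right hl c hφ hψM).trans ?_
    gcongr
    exact le_max_right _ _

end DilateTranslate

section Limit

variable {E 𝕜 ι : Type*} [NormedAddCommGroup E] [NormedSpace ℝ E] [FiniteDimensional ℝ E]
  [Nontrivial E] [MeasurableSpace E] [BorelSpace E] {μ : Measure E} [μ.IsAddHaarMeasure]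
  [RCLike 𝕜] {L : Filter ι} {l : ι → ℝ} {c : ι → E}

theorem tendsto_integral_dilateTranslate_mul_conj_of_hasCompactSupport (hl : ∀ i, 0 < l i)
    (hlc : Tendsto (fun i => l i + (l i)⁻¹ + ‖c i‖) L atTop) {φ ψ : E → 𝕜}
    (hφ : Continuous φ) (hφc : HasCompactSupport φ) (hψ : Continuous ψ)
    (hψc : HasCompactSupport ψ) :
    Tendsto (fun i => ∫ ξ, dilateTranslate (l i) (c i) φ ξ * conj (ψ ξ) ∂μ) L (𝓝 0) := by
  obtain ⟨a, ha⟩ := hφc.isCompact.isBounded.subset_closedBall 0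
  obtain ⟨b, hb0, hb⟩ := hψc.isCompact.isBounded.subset_closedBall_lt 0 0
  obtain ⟨Mφ, hMφ⟩ := hφc.exists_bound_of_continuous hφ
  obtain ⟨Mψ, hMψ⟩ := hψc.exists_bound_of_continuous hψ
  have hsuppφ := (subset_tsupport φ).trans ha
  have hsuppψ := (subset_tsupport ψ).trans hb
  set C := max (Mφ * ∫ ξ, ‖ψ ξ‖ ∂μ) (Mψ * ∫ ξ, ‖φ ξ‖ ∂μ)
  set p : ℝ := (finrank ℝ E : ℝ) / 2
  have hp : 0 < p := div_pos (Nat.cast_pos.2 Module.finrank_pos) two_pos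
  have hC : 0 ≤ C := le_max_of_le_left
    (mul_nonneg ((norm_nonneg _).trans (hMφ 0)) (integral_nonneg fun _ => norm_nonneg _))
  have hS : Tendsto (fun i => l i + (l i)⁻¹ + ‖c i‖ - a) L atTop := by
    simpa only [sub_eq_add_neg] using tendsto_atTop_add_const_right _ (-a) hlc
  refine squeeze_zero_norm' ?_
    (by simpa using ((hS.const_div_atTop (2 * (1 + b))).rpow_const_nhds_zero hp).const_mul C)
  filter_upwards [hlc.eventually_gt_atTop a] with i hi
  by_cases hci : ‖c i‖ ≤ a + l i * b
  · refine (norm_integral_dilateTranslate_mul_conj_le_min (hl i) (c i)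
      (hφ.integrable_of_hasCompactSupport hφc) hMφ
      (hψ.integrable_of_hasCompactSupport hψc) hMψ).trans ?_
    exact mul_le_mul_of_nonneg_left (Real.rpow_le_rpow (le_min (hl i).le (inv_pos.2 (hl i)).le)
      (min_inv_le_div_of_le_add_mul (hl i) hb0.le hci hi) hp.le) hC
  · rw [integral_dilateTranslate_mul_conj_eq_zero (hl i).le hsuppφ hsuppψ (not_le.1 hci),
      norm_zero]
    exact mul_nonneg hC (Real.rpow_nonneg (div_nonneg (by positivity) (sub_pos.2 hi).le) _)

theorem tendsto_integral_dilateTranslate_mul_conj (hl : ∀ i, 0 < l i)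
    (hlc : Tendsto (fun i => l i + (l i)⁻¹ + ‖c i‖) L atTop) {φ ψ : E → 𝕜}
    (hφ : MemLp φ 2 μ) (hψ : MemLp ψ 2 μ) :
    Tendsto (fun i => ∫ ξ, dilateTranslate (l i) (c i) φ ξ * conj (ψ ξ) ∂μ) L (𝓝 0) := by
  set A := (eLpNorm φ 2 μ).toReal
  set B := (eLpNorm ψ 2 μ).toReal
  refine tendsto_of_forall_dist_le fun ε hε => ?_
  obtain ⟨δ, hδε, hδ⟩ : ∃ δ, B * δ + δ * (A + δ) < ε ∧ 0 < δ := by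
    have h : Tendsto (fun δ : ℝ => B * δ + δ * (A + δ)) (𝓝[>] 0) (𝓝 0) :=
      tendsto_nhdsWithin_of_tendsto_nhds (by simpa using (by fun_prop :
        Continuous fun δ : ℝ => B * δ + δ * (A + δ)).tendsto 0)
    exact ((h.eventually (gt_mem_nhds hε)).and self_mem_nhdsWithin).exists
  obtain ⟨φ₀, hφ₀c, hφφ₀, hφ₀, hφ₀L⟩ := hφ.exists_hasCompactSupport_eLpNorm_sub_le
    ENNReal.ofNat_ne_top (ENNReal.ofReal_pos.2 hδ).ne'
  obtain ⟨ψ₀, hψ₀c, hψψ₀, hψ₀, hψ₀L⟩ := hψ.exists_hasCompactSupport_eLpNorm_sub_le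
    ENNReal.ofNat_ne_top (ENNReal.ofReal_pos.2 hδ).ne'
  refine ⟨_, tendsto_integral_dilateTranslate_mul_conj_of_hasCompactSupport (μ := μ) hl hlc
    hφ₀ hφ₀c hψ₀ hψ₀c, fun i => ?_⟩
  have hφδ := ENNReal.toReal_le_of_le_ofReal hδ.le hφφ₀
  have hψδ := ENNReal.toReal_le_of_le_ofReal hδ.le hψψ₀
  calc _ ≤ B * (eLpNorm (φ - φ₀) 2 μ).toReal +
        (eLpNorm (ψ - ψ₀) 2 μ).toReal * (A + (eLpNorm (φ - φ₀) 2 μ).toReal) := by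
        have := (hφ.dilateTranslate (hl i) (c i)).norm_integral_mul_conj_sub_le
          (hφ₀L.dilateTranslate (hl i) (c i)) hψ hψ₀L
        rwa [← dilateTranslate_sub, eLpNorm_dilateTranslate (hl i) _ (hφ.sub hφ₀L).1,
          eLpNorm_dilateTranslate (hl i) _ hφ.1, ← dist_eq_norm] at this
    _ ≤ B * δ + δ * (A + δ) := by gcongr
    _ ≤ ε := hδε.le

end Limit

theorem dilated_translate_weak_limit_vanishing
    (d : ℕ) (hd : 1 ≤ d) (φ : EuclideanSpace ℝ (Fin d) → ℂ)
    (hφ : MemLp φ 2 volume)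
    (lam : ℕ → ℝ) (hlam : ∀ n, 0 < lam n)
    (c : ℕ → EuclideanSpace ℝ (Fin d))
    (hdiv : Filter.Tendsto (fun n => lam n + (lam n)⁻¹ + ‖c n‖)
      Filter.atTop Filter.atTop) :
    ∀ ψ : EuclideanSpace ℝ (Fin d) → ℂ, MemLp ψ 2 volume →
      Filter.Tendsto (fun n => ∫ ξ,
          (((lam n ^ ((d : ℝ) / 2) : ℝ) : ℂ) * φ (lam n • ξ + c n)) *
            (starRingEnd ℂ) (ψ ξ))
        Filter.atTop (nhds 0) := by
  intro ψ hψ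
  have : Nontrivial (EuclideanSpace ℝ (Fin d)) :=
    Module.nontrivial_of_finrank_pos (R := ℝ) (by rwa [finrank_euclideanSpace_fin])
  have h := tendsto_integral_dilateTranslate_mul_conj hlam hdiv hφ hψ
  simp only [dilateTranslate, finrank_euclideanSpace_fin] at h
  exact h
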